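/- For all n ≥ 1 and any family x₁,…,xₙ of booleans, the following equality of complex numbers holds: (−1)^{x₁ ∧ … ∧ xₙ} = ∏_{i=1}^{n} ∏_{K ∈ P(n,i)} exp( iπ · (−1)^{i−1} · (⊕_{k∈K} x_k) / 2^{n−1} ), where the conjunction x₁ ∧ … ∧ xₙ and each parity ⊕_{k∈K} x_k are identified with integers in {0,1}, and P(n,i) is the set of all subsets of {1,…,n} of size exactly i. -/

import Mathlib

/-!
Write the parity indicator of `m` as `(1 - (-1)^m) / 2`. The total phase exponent is then
`iπ / 2^n · ∑_K (-1)^(|K|+1) (1 - ∏_{k ∈ K} (-1)^(x_k))` over all subsets `K`. The alternating sum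
`∑_K (-1)^|K|` vanishes for `n ≥ 1`, and the expansion `∏_k (1 + a_k) = ∑_K ∏_{k ∈ K} a_k` turns
the rest into `iπ / 2^n · ∏_k (1 - (-1)^(x_k)) = iπ · ∏_k x_k`.
-/

open Complex Real Finset

theorem two_mul_ite_odd {R : Type*} [Ring R] (m : ℕ) :
    2 * (if Odd m then 1 else 0 : R) = 1 - (-1) ^ m := by
  rcases m.even_or_odd with hm | hm
  · simp [hm.neg_one_pow, Nat.not_odd_iff_even.2 hm]
  · rw [if_pos hm, hm.neg_one_pow]
    norm_num

namespace Finset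

variable {ι : Type*}

theorem sum_Icc_sum_powersetCard {M : Type*} [AddCommMonoid M] (s : Finset ι)
    (g : Finset ι → M) (h0 : g ∅ = 0) :
    ∑ i ∈ Icc 1 #s, ∑ K ∈ powersetCard i s, g K = ∑ K ∈ s.powerset, g K := by
  rw [sum_powerset, sum_range_succ', powersetCard_zero, sum_singleton, h0, add_zero, range_eq_Ico,
    sum_Ico_add' (fun i => ∑ K ∈ powersetCard i s, g K), zero_add, Ico_add_one_right_eq_Icc]

theorem prod_neg_ite_neg_one {R : Type*} [CommRing R] (K : Finset ι) (p : ι → Prop)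
    [DecidablePred p] :
    ∏ k ∈ K, -(if p k then -1 else 1 : R) = (-1) ^ #K * (-1) ^ #{k ∈ K | p k} := by
  rw [prod_neg, prod_ite, prod_const, prod_const_one, mul_one]

theorem sum_powerset_neg_one_pow_mul_ite_odd_card_filter {s : Finset ι} (hs : s.Nonempty)
    (p : ι → Prop) [DecidablePred p] :
    ∑ K ∈ s.powerset, (-1 : ℤ) ^ (#K + 1) * (if Odd #{k ∈ K | p k} then 1 else 0) =
      2 ^ (#s - 1) * ∏ k ∈ s, if p k then 1 else 0 := by
  have h2 : (2 : ℤ) ^ #s = 2 * 2 ^ (#s - 1) := by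
    rw [← pow_succ', Nat.sub_add_cancel hs.card_pos]
  refine mul_left_cancel₀ (two_ne_zero' ℤ) ?_
  calc 2 * ∑ K ∈ s.powerset, (-1 : ℤ) ^ (#K + 1) * (if Odd #{k ∈ K | p k} then 1 else 0)
      = ∑ K ∈ s.powerset, ∏ k ∈ K, -(if p k then -1 else 1 : ℤ) -
          ∑ K ∈ s.powerset, (-1 : ℤ) ^ #K := by
        rw [mul_sum, ← sum_sub_distrib]
        refine sum_congr rfl fun K _ => ?_
        rw [mul_left_comm, two_mul_ite_odd, prod_neg_ite_neg_one]
        ring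
    _ = ∏ k ∈ s, (1 + -(if p k then -1 else 1 : ℤ)) := by
        rw [sum_powerset_neg_one_pow_card_of_nonempty hs, sub_zero, prod_one_add]
    _ = ∏ k ∈ s, 2 * (if p k then 1 else 0 : ℤ) := by
        refine prod_congr rfl fun k _ => ?_
        split_ifs <;> norm_num
    _ = 2 * (2 ^ (#s - 1) * ∏ k ∈ s, if p k then 1 else 0) := by
        rw [prod_mul_distrib, prod_const, h2, mul_assoc]

end Finset

/-- For all `n ≥ 1` and any family of booleans `x : Fin n → Bool`,
`(−1)^(x₁ ∧ … ∧ xₙ) = ∏_{i=1}^n ∏_{K ∈ P(n,i)} exp(iπ · (−1)^(i−1) · (⊕_{k∈K} x k) / 2^(n−1))`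
as complex numbers, where the conjunction and each parity `⊕_{k∈K} x k` are
identified with integers in `{0,1}`, and `P(n,i)` is the collection of subsets of
`{1,…,n}` of cardinality `i`. -/
theorem controlled_Z_phase_decomposition (n : ℕ) (hn : 1 ≤ n) (x : Fin n → Bool) :
    (-1 : ℂ) ^ (∏ k : Fin n, (if x k then (1 : ℕ) else 0)) =
      ∏ i ∈ Finset.Icc 1 n,
        ∏ K ∈ (Finset.univ : Finset (Fin n)).powersetCard i,
          Complex.exp (Complex.I * (Real.pi : ℂ) * (-1 : ℂ) ^ (i - 1) *
            (if Odd (K.filter (fun k => x k = true)).card then (1 : ℂ) else 0) /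
              (2 : ℂ) ^ (n - 1)) := by
  have key := sum_powerset_neg_one_pow_mul_ite_odd_card_filter
    (univ_nonempty_iff.2 ⟨⟨0, hn⟩⟩) (fun k => x k = true)
  rw [← sum_Icc_sum_powersetCard _ _ (by simp), card_univ, Fintype.card_fin] at key
  have hphase : ∑ i ∈ Icc 1 n, ∑ K ∈ (univ : Finset (Fin n)).powersetCard i,
      I * π * (-1 : ℂ) ^ (i - 1) * (if Odd #{k ∈ K | x k = true} then 1 else 0) / 2 ^ (n - 1) =
        (∏ k : Fin n, (if x k then (1 : ℕ) else 0) : ℕ) * (π * I) := by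
    calc _ = I * π / 2 ^ (n - 1) * ((∑ i ∈ Icc 1 n, ∑ K ∈ (univ : Finset (Fin n)).powersetCard i,
            (-1 : ℤ) ^ (#K + 1) * (if Odd #{k ∈ K | x k = true} then 1 else 0) : ℤ) : ℂ) := by
          push_cast
          simp only [mul_sum]
          refine sum_congr rfl fun i hi => sum_congr rfl fun K hK => ?_
          obtain ⟨j, rfl⟩ : ∃ j, i = j + 1 := ⟨i - 1, by grind⟩
          rw [(mem_powersetCard.1 hK).2, Nat.add_sub_cancel]
          ring
      _ = _ := by
          rw [key]
          push_cast
          field_simp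
  simp only [← Complex.exp_sum]
  rw [hphase, Complex.exp_nat_mul, exp_pi_mul_I]
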